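/- Let z, α, g ∈ ℝ, Φ > 0 and 0 ≤ ϑ ≤ ϑ̄. Define d := α − ϑ̄ · tanh(z·ϑ̄/Φ). If |d − g| ≤ ϑ, then z·g ≤ z·α + 0.2785·Φ. -/

import Mathlib

lemma poly_key (t : ℝ) (ht : 0 ≤ t) : t ≤ 0.2785 * (Real.exp t + 1) := by
  have h := Real.sum_le_exp_of_nonneg ht 10
  simp [Finset.sum_range_succ, Nat.factorial] at h
  nlinarith [pow_nonneg ht 2, pow_nonneg ht 3, pow_nonneg ht 4, pow_nonneg ht 5, pow_nonneg ht 6, pow_nonneg ht 7, pow_nonneg ht 8, pow_nonneg ht 9, sq_nonneg (t - 1.2785), sq_nonneg (t*t - 1.63456), mul_nonneg ht (sq_nonneg (t - 1.2785)), mul_nonneg (mul_nonneg ht ht) (sq_nonneg (t - 1.2785))]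

lemma tanh_key_nonneg (x Φ : ℝ) (hΦ : 0 < Φ) (hx : 0 ≤ x) :
    x ≤ x * Real.tanh (x / Φ) + 0.2785 * Φ := by
  have ht : (0:ℝ) ≤ 2 * x / Φ := by positivity
  have h := poly_key (2 * x / Φ) ht
  have hE : Real.exp (2 * x / Φ) = Real.exp (x / Φ) ^ 2 := by
    rw [← Real.exp_nat_mul]; ring_nf
  have hEpos := Real.exp_pos (x / Φ)
  rw [Real.tanh_eq_sinh_div_cosh, Real.sinh_eq, Real.cosh_eq]
  have hexp : Real.exp (-(x/Φ)) = 1 / Real.exp (x/Φ) := by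
    rw [Real.exp_neg]; ring
  rw [hexp]
  rw [hE] at h
  have hcosh : 0 < Real.exp (x/Φ) + 1 / Real.exp (x/Φ) := by positivity
  rw [div_le_iff₀ hΦ] at h
  set E := Real.exp (x/Φ) with hEdef
  have h2 : 0 < E^2 + 1 := by positivity
  have e1 : (E - 1/E)/2/((E+1/E)/2) = (E^2-1)/(E^2+1) := by
    field_simp
  rw [e1]
  have e2 : x * ((E^2-1)/(E^2+1)) = x - 2*x/(E^2+1) := by
    field_simp; ring
  rw [e2]
  have h3 : 2*x/(E^2+1) ≤ 0.2785*Φ := by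
    rw [div_le_iff₀ h2]; nlinarith
  linarith

lemma tanh_key (x Φ : ℝ) (hΦ : 0 < Φ) : |x| ≤ x * Real.tanh (x / Φ) + 0.2785 * Φ := by
  rcases le_or_gt 0 x with hx | hx
  · rw [abs_of_nonneg hx]; exact tanh_key_nonneg x Φ hΦ hx
  · rw [abs_of_neg hx]
    have := tanh_key_nonneg (-x) Φ hΦ (by linarith)
    rw [neg_div, Real.tanh_neg] at this
    linarith [this]

/-- Key inequality of the fixed-threshold event-triggered strategy. -/
theorem fixed_threshold_key_inequality (z α g Φ ϑ ϑbar : ℝ)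
    (hΦ : 0 < Φ) (hϑ0 : 0 ≤ ϑ) (hϑ : ϑ ≤ ϑbar)
    (hd : |(α - ϑbar * Real.tanh (z * ϑbar / Φ)) - g| ≤ ϑ) :
    z * g ≤ z * α + 0.2785 * Φ := by
  have hϑbar : 0 ≤ ϑbar := hϑ0.trans hϑ
  have h1 := tanh_key (z * ϑbar) Φ hΦ
  have h3 : |g - (α - ϑbar * Real.tanh (z * ϑbar / Φ))| ≤ ϑbar := by
    rw [abs_sub_comm]; linarith
  have h2 : z * (g - (α - ϑbar * Real.tanh (z * ϑbar / Φ))) ≤ |z * ϑbar| := by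
    calc z * (g - (α - ϑbar * Real.tanh (z * ϑbar / Φ)))
        ≤ |z * (g - (α - ϑbar * Real.tanh (z * ϑbar / Φ)))| := le_abs_self _
      _ = |z| * |g - (α - ϑbar * Real.tanh (z * ϑbar / Φ))| := abs_mul _ _
      _ ≤ |z| * ϑbar := mul_le_mul_of_nonneg_left h3 (abs_nonneg z)
      _ = |z * ϑbar| := by rw [abs_mul, abs_of_nonneg hϑbar]
  have key : z * g = z * α - (z * ϑbar) * Real.tanh (z * ϑbar / Φ)
      + z * (g - (α - ϑbar * Real.tanh (z * ϑbar / Φ))) := by ring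
  linarith
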